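/- Consider a binary tree over a finite set $S$ of key-value pairs with distinct keys, where leaves hold the elements and each internal node $n$ with key $k_n$ has all leaf elements of its left subtree with key $< k_n$ and all leaf elements of its right subtree with key $\ge k_n$. Let $f$ be an additive aggregate function with operation $\oplus$ of an abelian group $(B, \oplus)$ with identity $e$, and let each node's aggValue be $f$ of the set of elements in its subtree's leaves. Then the traversal template—starting with accumulator $e$, at each internal node setting $c = \mathrm{acc} \oplus \mathrm{aggValue}(\mathrm{left\ child})$, descending right (updating $\mathrm{acc} := c$) iff a predicate holds, else descending left—terminates at a leaf $L$ with final accumulator equal to $f(\{a \in S : \mathrm{key}(a) < \mathrm{key}(L)\})$ when that set is nonempty (and $e$ if it is empty). -/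

import Mathlib

/-- An external binary tree: elements (key-value pairs, abstracted as type `A`)
are held in leaves; internal nodes carry a routing key. -/
inductive ExtTree (K A : Type*) where
  | leaf (a : A) : ExtTree K A
  | node (k : K) (l r : ExtTree K A) : ExtTree K A

namespace ExtTree

variable {K A B : Type*}

/-- The set of elements held in the tree's leaves. -/
def elems [DecidableEq A] : ExtTree K A → Finset A
  | leaf a => {a}
  | node _ l r => l.elems ∪ r.elems

/-- The external-BST invariant: at every internal node with key `k`, all left
subtree elements have key `< k` and all right subtree elements have key `≥ k`. -/
def isBST [DecidableEq A] [LinearOrder K] (key : A → K) : ExtTree K A → Prop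
  | leaf _ => True
  | node k l r => (∀ a ∈ l.elems, key a < k) ∧ (∀ a ∈ r.elems, k ≤ key a) ∧
      isBST key l ∧ isBST key r

/-- The aggregate traversal template (Figure 1): starting with accumulator
`acc`, at each internal node compute `c = acc ⊕ aggValue(left child)` (where the
aggValue of a subtree is `f` of its leaf elements), descend right with
accumulator `c` iff the predicate `p c k` holds, else descend left.
Returns the final accumulator and the reached leaf's element. -/
def traverseAgg [DecidableEq A] [AddCommGroup B] (f : Finset A → B)
    (p : B → K → Bool) (acc : B) : ExtTree K A → B × A
  | leaf a => (acc, a)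
  | node k l r =>
      let c := acc + f l.elems
      if p c k then traverseAgg f p c r else traverseAgg f p acc l

end ExtTree

/-!
The accumulator is `f` of the left subtrees skipped so far. When the traversal goes right at a
node with key `k`, the reached leaf has key `≥ k`, so the whole left subtree lies below it and
is correctly added; when it goes left, the leaf has key `< k`, so no element of the right
subtree lies below it. Additivity of `f` glues the pieces together.
-/

namespace ExtTree

variable {K A B : Type*} [DecidableEq A]

theorem map_union_of_disjoint [AddCommGroup B] {f : Finset A → B}
    (hadd : ∀ X1 X2 : Finset A, X1.Nonempty → X2.Nonempty → Disjoint X1 X2 →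
      f (X1 ∪ X2) = f X1 + f X2)
    (hempty : f (∅ : Finset A) = 0) {X Y : Finset A} (hXY : Disjoint X Y) :
    f (X ∪ Y) = f X + f Y := by
  rcases X.eq_empty_or_nonempty with rfl | hX
  · rw [Finset.empty_union, hempty, zero_add]
  rcases Y.eq_empty_or_nonempty with rfl | hY
  · rw [Finset.union_empty, hempty, add_zero]
  exact hadd X Y hX hY hXY

theorem traverseAgg_snd_mem [AddCommGroup B] (f : Finset A → B) (p : B → K → Bool) (acc : B)
    (T : ExtTree K A) : (T.traverseAgg f p acc).2 ∈ T.elems := by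
  induction T generalizing acc with
  | leaf a => simp [traverseAgg, elems]
  | node k l r ihl ihr =>
    simp only [traverseAgg, elems, Finset.mem_union]
    split
    · exact Or.inr (ihr _)
    · exact Or.inl (ihl _)

section Filter

variable [LinearOrder K] {key : A → K} {k : K} {l r : ExtTree K A} {x : K}

theorem filter_node_of_le (hl : ∀ a ∈ l.elems, key a < k) (hx : k ≤ x) :
    (l.elems ∪ r.elems).filter (fun a => key a < x) =
      l.elems ∪ r.elems.filter (fun a => key a < x) := by
  rw [Finset.filter_union, Finset.filter_true_of_mem fun a ha => (hl a ha).trans_le hx]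

theorem filter_node_of_lt (hr : ∀ a ∈ r.elems, k ≤ key a) (hx : x < k) :
    (l.elems ∪ r.elems).filter (fun a => key a < x) = l.elems.filter (fun a => key a < x) := by
  rw [Finset.filter_union,
    Finset.filter_false_of_mem fun a ha => not_lt.2 (hx.trans_le (hr a ha)).le,
    Finset.union_empty]

end Filter

theorem traverseAgg_fst_eq_add [LinearOrder K] [AddCommGroup B] (key : A → K)
    {f : Finset A → B}
    (hadd : ∀ X1 X2 : Finset A, X1.Nonempty → X2.Nonempty → Disjoint X1 X2 →
      f (X1 ∪ X2) = f X1 + f X2)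
    (hempty : f (∅ : Finset A) = 0) (p : B → K → Bool) {T : ExtTree K A}
    (hbst : T.isBST key) (acc : B) :
    (T.traverseAgg f p acc).1 =
      acc + f (T.elems.filter (fun a => key a < key (T.traverseAgg f p acc).2)) := by
  induction T generalizing acc with
  | leaf a =>
    have hnone : ({a} : Finset A).filter (fun b => key b < key a) = ∅ := by simp
    change acc = acc + f (({a} : Finset A).filter (fun b => key b < key a))
    rw [hnone, hempty, add_zero]
  | node k l r ihl ihr =>
    obtain ⟨hl, hr, hbl, hbr⟩ := hbst
    simp only [traverseAgg, elems]
    split_ifs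
    · set L := (r.traverseAgg f p (acc + f l.elems)).2
      have hkL : k ≤ key L := hr L (traverseAgg_snd_mem f p _ r)
      have hdisj : Disjoint l.elems (r.elems.filter (fun a => key a < key L)) :=
        Finset.disjoint_left.2 fun a hal har =>
          (hl a hal).not_ge (hr a (Finset.mem_of_mem_filter a har))
      rw [filter_node_of_le hl hkL, map_union_of_disjoint hadd hempty hdisj, ← add_assoc]
      exact ihr hbr _
    · have hLk := hl _ (traverseAgg_snd_mem f p acc l)
      rw [filter_node_of_lt hr hLk]
      exact ihl hbl acc

end ExtTree

theorem traverseAgg_correct_general {K A B : Type*} [LinearOrder K] [DecidableEq A]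
    [AddCommGroup B] (key : A → K) (f : Finset A → B)
    (hadd : ∀ X1 X2 : Finset A, X1.Nonempty → X2.Nonempty → Disjoint X1 X2 →
      f (X1 ∪ X2) = f X1 + f X2)
    (hempty : f (∅ : Finset A) = 0)
    (p : B → K → Bool) (T : ExtTree K A)
    (hbst : T.isBST key) :
    (T.traverseAgg f p 0).1 =
      f (T.elems.filter (fun a => key a < key (T.traverseAgg f p 0).2)) := by
  rw [ExtTree.traverseAgg_fst_eq_add key hadd hempty p hbst 0, zero_add]

/-- Correctness of the aggregate traversal template: on an external BST with
distinct keys and an additive aggregate function `f` into an abelian group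
(extended by `f ∅ = 0`), the traversal starting from accumulator `0` ends at a
leaf `L` with final accumulator `f {a ∈ S : key a < key L}` (which is `0` when
that set is empty). -/
theorem traverseAgg_correct {K A B : Type*} [LinearOrder K] [DecidableEq A]
    [AddCommGroup B] (key : A → K) (f : Finset A → B)
    (hadd : ∀ X1 X2 : Finset A, X1.Nonempty → X2.Nonempty → Disjoint X1 X2 →
      f (X1 ∪ X2) = f X1 + f X2)
    (hempty : f (∅ : Finset A) = 0)
    (p : B → K → Bool) (T : ExtTree K A)
    (hbst : T.isBST key)
    (hinj : Set.InjOn key (T.elems : Set A)) :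
    (T.traverseAgg f p 0).1 =
      f (T.elems.filter (fun a => key a < key (T.traverseAgg f p 0).2)) :=
  traverseAgg_correct_general key f hadd hempty p T hbst
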